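/- arXiv:1410.5156 — 3 statements merged into one kernel-verified Lean document; each statement's English description precedes it below -/
import Mathlib

section
/- Let p : M' → M be a covering map of topological spaces with M' nonempty, connected and locally path-connected, and let G be a path-connected, locally path-connected topological group with identity element e. Let θ : M × G → M be a continuous right action of G on M (so θ(x,e) = x and θ(θ(x,g),h) = θ(x,gh) for all x ∈ M and g,h ∈ G). Assume that for every point x ∈ M the orbit map G → M, g ↦ θ(x,g), induces the trivial homomorphism of fundamental groups π₁(G,e) → π₁(M,x). Then there exists a unique continuous map θ' : M' × G → M' such that (i) p(θ'(z,g)) = θ(p(z),g) for all z ∈ M', g ∈ G, and (ii) θ' is a right action of G on M' (θ'(z,e) = z and θ'(θ'(z,g),h) = θ'(z,gh) for all z, g, h). -/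
/-!
By the lifting criterion, `(z, g) ↦ θ (p z, g)` lifts through `p` once its image on
`π₁(M' × G)` lies in that of `p`. A loop `(α, β)` in `M' × G` is homotopic to `α` followed by `β`,
and `β` is sent into an orbit, hence to a null-homotopic loop: the image of `(α, β)` is that of
`α`. For the lift `θ'` with `θ' (z₀, 1) = z₀`, the identities `θ' (z, 1) = z` and
`θ' (θ' (z, g), h) = θ' (z, g * h)` hold after composing with `p` and at one point, hence
everywhere by uniqueness of lifts from a connected space; the same uniqueness gives that of `θ'`.
-/

namespace Path

variable {X Y Z : Type*} [TopologicalSpace X] [TopologicalSpace Y] [TopologicalSpace Z]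

theorem Homotopic.map_prod {F : X × Y → Z} (hF : Continuous F) {x x' : X} {y y' : Y}
    (α : Path x x') (β : Path y y') :
    ((α.prod β).map hF).Homotopic
      ((α.map (hF.comp (.prodMk_left y))).trans (β.map (hF.comp (.prodMk_right x')))) := by
  have hsplit : (α.prod β).Homotopic ((α.prod (Path.refl y)).trans ((Path.refl x').prod β)) := by
    rw [trans_prod_eq_prod_trans]
    exact ⟨Homotopic.prodHomotopy (Homotopy.transRefl α).symm (Homotopy.reflTrans β).symm⟩
  have := hsplit.map ⟨F, hF⟩
  rw [map_trans] at this
  exact this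

end Path

section RightAction

variable {E M G : Type*} [TopologicalSpace E] [TopologicalSpace M] [TopologicalSpace G] [Monoid G]
  {θ : M × G → M} (hθcont : Continuous θ) (hθone : ∀ x : M, θ (x, 1) = x)

include hθone in
theorem Path.Homotopic.map_prod_of_orbit_trivial {x x' : M} (α : Path x x') (β : Path (1 : G) 1)
    (htriv : (β.map (hθcont.comp (.prodMk_right x'))).Homotopic (Path.refl (θ (x', 1)))) :
    ((α.prod β).map hθcont).Homotopic (α.cast (hθone x) (hθone x')) := by
  have hfirst : α.map (hθcont.comp (.prodMk_left 1)) = α.cast (hθone x) (hθone x') := by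
    ext t
    exact hθone (α t)
  refine (Homotopic.map_prod hθcont α β).trans ?_
  rw [hfirst]
  exact (Homotopic.hcomp (.refl _) htriv).trans ⟨Homotopy.transRefl _⟩

open FundamentalGroup Path.Homotopic.Quotient in
include hθone in
theorem FundamentalGroup.range_map_action_comp_le {p : E → M} (hp : Continuous p) (z₀ : E)
    (htriv : ∀ β : Path (1 : G) 1,
      (β.map (hθcont.comp (.prodMk_right (p z₀)))).Homotopic (Path.refl (θ (p z₀, 1)))) :
    (map ⟨fun y : E × G => θ (p y.1, y.2), by fun_prop⟩ (z₀, 1)).range ≤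
      (mapOfEq ⟨p, hp⟩ (hθone (p z₀)).symm).range := by
  rintro _ ⟨γ, rfl⟩
  induction γ using Path.Homotopic.Quotient.ind with | _ γ => ?_
  refine ⟨fromPath (mk (γ.map continuous_fst)), ?_⟩
  rw [mapOfEq_apply, map_apply, ← mk_map, ← mk_map, ← mk_cast, Path.Homotopic.Quotient.eq]
  have hγ : γ.map (show Continuous fun y : E × G => θ (p y.1, y.2) by fun_prop) =
      (((γ.map continuous_fst).map hp).prod (γ.map continuous_snd)).map hθcont := rfl
  rw [hγ]
  exact (Path.Homotopic.map_prod_of_orbit_trivial hθcont hθone _ _ (htriv _)).symm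

variable {p : E → M} (hp : IsCoveringMap p) {F : E × G → E} (hF : Continuous F)
  (hFp : ∀ z g, p (F (z, g)) = θ (p z, g))

include hθone hp hF hFp in
theorem IsCoveringMap.lift_apply_one [PreconnectedSpace E] {z₀ : E} (hz₀ : F (z₀, 1) = z₀)
    (z : E) : F (z, 1) = z := by
  refine congrFun (hp.eq_of_comp_eq (g₁ := fun z => F (z, 1)) (g₂ := id) (by fun_prop)
    continuous_id (funext fun z => ?_) z₀ hz₀) z
  simp [hFp, hθone]

include hp hF hFp in
theorem IsCoveringMap.lift_apply_lift_apply [ContinuousMul G] [PreconnectedSpace E]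
    [PreconnectedSpace G] (hθmul : ∀ (x : M) (g h : G), θ (θ (x, g), h) = θ (x, g * h))
    {z₀ : E} (hz₀ : F (z₀, 1) = z₀) (z : E) (g h : G) : F (F (z, g), h) = F (z, g * h) := by
  refine congrFun (hp.eq_of_comp_eq (A := (E × G) × G) (g₁ := fun w => F (F w.1, w.2))
    (g₂ := fun w => F (w.1.1, w.1.2 * w.2)) (by fun_prop) (by fun_prop) (funext fun w => ?_)
    ((z₀, 1), 1) (by simp [hz₀])) ((z, g), h)
  simp [hFp, hθmul]

end RightAction

theorem lift_action_of_covering_general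
    {M' M G : Type*} [TopologicalSpace M'] [TopologicalSpace M]
    [TopologicalSpace G] [Group G] [IsTopologicalGroup G]
    [PathConnectedSpace G] [LocallyPathConnectedSpace G]
    [Nonempty M'] [ConnectedSpace M'] [LocallyPathConnectedSpace M']
    (p : M' → M) (hp : IsCoveringMap p)
    (θ : M × G → M) (hθcont : Continuous θ)
    (hθone : ∀ x : M, θ (x, 1) = x)
    (hθmul : ∀ (x : M) (g h : G), θ (θ (x, g), h) = θ (x, g * h))
    (htriv : ∀ (x : M) (γ : Path (1 : G) 1),
      (γ.map (hθcont.comp (Continuous.prodMk_right x))).Homotopic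
        (Path.refl (θ (x, 1)))) :
    ∃! θ' : M' × G → M',
      Continuous θ' ∧
      (∀ (z : M') (g : G), p (θ' (z, g)) = θ (p z, g)) ∧
      (∀ z : M', θ' (z, 1) = z) ∧
      (∀ (z : M') (g h : G), θ' (θ' (z, g), h) = θ' (z, g * h)) := by
  have : PathConnectedSpace M' := pathConnectedSpace_iff_connectedSpace.mpr ‹_›
  obtain ⟨z₀⟩ := ‹Nonempty M'›
  obtain ⟨F, ⟨hF₀, hpF⟩, -⟩ := hp.existsUnique_continuousMap_lifts_of_range_le _
    (FundamentalGroup.range_map_action_comp_le hθcont hθone hp.continuous z₀ (htriv (p z₀)))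
  have hFp (z : M') (g : G) : p (F (z, g)) = θ (p z, g) := congrFun hpF (z, g)
  refine ⟨F, ⟨F.continuous, hFp, hp.lift_apply_one hθone F.continuous hFp hF₀,
    hp.lift_apply_lift_apply F.continuous hFp hθmul hF₀⟩, ?_⟩
  rintro θ' ⟨hθ'cont, hθ'p, hθ'one, -⟩
  exact hp.eq_of_comp_eq hθ'cont F.continuous (funext fun y => (hθ'p y.1 y.2).trans (hFp ..).symm)
    (z₀, 1) (by rw [hθ'one, hF₀])

/-- **Lifting a group action along a covering map** (topological version of
Proposition 2.1). Let `p : M' → M` be a covering map (a continuous surjection,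
evenly covered everywhere) with `M'` nonempty, connected and locally
path-connected, and let `G` be a path-connected, locally path-connected
topological group. Let `θ : M × G → M` be a continuous right action of `G` on
`M`. Assume that for every `x : M` the orbit map `g ↦ θ (x, g)` induces the
trivial homomorphism `π₁(G, 1) → π₁(M, x)`, i.e. every loop at `1` in `G` maps
to a null-homotopic loop in `M`. Then there is a unique continuous map
`θ' : M' × G → M'` lifting `θ` (that is, `p (θ' (z, g)) = θ (p z, g)`) which is
a right action of `G` on `M'`. -/
theorem lift_action_of_covering
    {M' M G : Type*} [TopologicalSpace M'] [TopologicalSpace M]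
    [TopologicalSpace G] [Group G] [IsTopologicalGroup G]
    [PathConnectedSpace G] [LocallyPathConnectedSpace G]
    [Nonempty M'] [ConnectedSpace M'] [LocallyPathConnectedSpace M']
    (p : M' → M) (hp : IsCoveringMap p) (hpsurj : Function.Surjective p)
    (θ : M × G → M) (hθcont : Continuous θ)
    (hθone : ∀ x : M, θ (x, 1) = x)
    (hθmul : ∀ (x : M) (g h : G), θ (θ (x, g), h) = θ (x, g * h))
    (htriv : ∀ (x : M) (γ : Path (1 : G) 1),
      (γ.map (hθcont.comp (Continuous.prodMk_right x))).Homotopic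
        (Path.refl (θ (x, 1)))) :
    ∃! θ' : M' × G → M',
      Continuous θ' ∧
      (∀ (z : M') (g : G), p (θ' (z, g)) = θ (p z, g)) ∧
      (∀ z : M', θ' (z, 1) = z) ∧
      (∀ (z : M') (g h : G), θ' (θ' (z, g), h) = θ' (z, g * h)) :=
  lift_action_of_covering_general p hp θ hθcont hθone hθmul htriv
end

section
/- Let p : M' → M be a covering map of topological spaces with M' connected, and let G be a connected topological group. Let θ : M × G → M be a continuous right action of G on M, and let θ' : M' × G → M' be a continuous right action of G on M' lifting θ, i.e. p(θ'(z,g)) = θ(p(z),g) for all z ∈ M', g ∈ G. Then every deck transformation of p commutes with the action θ': for every homeomorphism γ : M' → M' with p ∘ γ = p, one has γ(θ'(z,g)) = θ'(γ(z),g) for all z ∈ M' and g ∈ G. -/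
/-!
For fixed `z`, both `g ↦ γ (θ' (z, g))` and `g ↦ θ' (γ z, g)` are continuous lifts of
`g ↦ θ (p z, g)` through `p`, and they agree at `g = 1`. Since `G` is connected, uniqueness of
lifts through a covering map makes them equal.
-/

theorem IsCoveringMap.apply_lift_eq_lift_apply_of_deck {E B Y : Type*} [TopologicalSpace E]
    [TopologicalSpace B] [TopologicalSpace Y] [ConnectedSpace Y] {p : E → B}
    (hp : IsCoveringMap p) {γ : E → E} (hγcont : Continuous γ) (hγ : ∀ z, p (γ z) = p z)
    {F : E × Y → E} (hF : Continuous F) {Φ : B × Y → B} (hΦ : ∀ z y, p (F (z, y)) = Φ (p z, y))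
    {y₀ : Y} (hy₀ : ∀ z, F (z, y₀) = z) (z : E) (y : Y) :
    γ (F (z, y)) = F (γ z, y) := by
  have hlifts : p ∘ (fun y => γ (F (z, y))) = p ∘ (fun y => F (γ z, y)) := by
    funext y
    simp only [Function.comp_apply, hγ, hΦ]
  have hbase : γ (F (z, y₀)) = F (γ z, y₀) := by rw [hy₀, hy₀]
  exact congrFun (hp.eq_of_comp_eq (hγcont.comp (hF.comp (.prodMk_right z)))
    (hF.comp (.prodMk_right (γ z))) hlifts y₀ hbase) y

theorem deck_commutes_with_lifted_action_general
    {M' M G : Type*} [TopologicalSpace M'] [TopologicalSpace M]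
    [TopologicalSpace G] [Group G]
    [ConnectedSpace G]
    (p : M' → M) (hp : IsCoveringMap p)
    (θ : M × G → M)
    (θ' : M' × G → M') (hθ'cont : Continuous θ')
    (hθ'one : ∀ z : M', θ' (z, 1) = z)
    (hlift : ∀ (z : M') (g : G), p (θ' (z, g)) = θ (p z, g))
    (γ : M' ≃ₜ M') (hγ : ∀ z : M', p (γ z) = p z) :
    ∀ (z : M') (g : G), γ (θ' (z, g)) = θ' (γ z, g) :=
  hp.apply_lift_eq_lift_apply_of_deck γ.continuous hγ hθ'cont hlift hθ'one

/-- **Deck transformations commute with a lifted action of a connected group**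
(topological version of Lemma 2.2). Let `p : M' → M` be a covering map with
`M'` connected, `G` a connected topological group, `θ` a continuous right
action of `G` on `M`, and `θ'` a continuous right action of `G` on `M'`
lifting `θ` (i.e. `p (θ' (z, g)) = θ (p z, g)`). Then every deck
transformation `γ` of `p` (a homeomorphism of `M'` with `p ∘ γ = p`) commutes
with `θ'`: `γ (θ' (z, g)) = θ' (γ z, g)` for all `z` and `g`. -/
theorem deck_commutes_with_lifted_action
    {M' M G : Type*} [TopologicalSpace M'] [TopologicalSpace M]
    [TopologicalSpace G] [Group G] [IsTopologicalGroup G]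
    [ConnectedSpace M'] [ConnectedSpace G]
    (p : M' → M) (hp : IsCoveringMap p) (hpsurj : Function.Surjective p)
    (θ : M × G → M) (hθcont : Continuous θ)
    (hθone : ∀ x : M, θ (x, 1) = x)
    (hθmul : ∀ (x : M) (g h : G), θ (θ (x, g), h) = θ (x, g * h))
    (θ' : M' × G → M') (hθ'cont : Continuous θ')
    (hθ'one : ∀ z : M', θ' (z, 1) = z)
    (hθ'mul : ∀ (z : M') (g h : G), θ' (θ' (z, g), h) = θ' (z, g * h))
    (hlift : ∀ (z : M') (g : G), p (θ' (z, g)) = θ (p z, g))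
    (γ : M' ≃ₜ M') (hγ : ∀ z : M', p (γ z) = p z) :
    ∀ (z : M') (g : G), γ (θ' (z, g)) = θ' (γ z, g) :=
  deck_commutes_with_lifted_action_general p hp θ θ' hθ'cont hθ'one hlift γ hγ
end

section
/- Let f : Y → X be a continuous map of topological spaces with Y path-connected, and let p : E → X be a covering map with E path-connected. Fix y₀ ∈ Y and e₀ ∈ E with p(e₀) = f(y₀). If the induced homomorphism f₊ : π₁(Y,y₀) → π₁(X,f(y₀)) is surjective, then the pullback Y ×_X E = {(y,e) ∈ Y × E : f(y) = p(e)} (with the subspace topology of the product) is path-connected. -/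
/-!
Write `Z = {(y, e) : f y = p e}`. Lifting `f ∘ η` from `e₀` along a path `η` from `y₀` to `y`
gives a path in `Z` from `(y₀, e₀)` to `(y, e)`, where `e` is the monodromy of `[f ∘ η]` applied
to `e₀`. So it suffices that every point of every fibre `p⁻¹(f y)` is such an endpoint. Since
monodromy along a fixed `γ : y₀ ⤳ y` is a bijection of fibres, this reduces to the fibre over
`f y₀`; there the loops of `X` act transitively because `E` is path-connected, and every loop
class is the image of a loop class of `Y` by surjectivity of `f₊`.
-/

namespace IsCoveringMap

variable {E X : Type*} [TopologicalSpace E] [TopologicalSpace X] {p : E → X}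
  (cov : IsCoveringMap p)

theorem exists_monodromy_eq [PathConnectedSpace E] {x : X} (e e' : p ⁻¹' {x}) :
    ∃ γ : Path x x, cov.monodromy (.mk γ) e = e' := by
  let Γ : Path (e : E) e' := PathConnectedSpace.somePath _ _
  exact ⟨(Γ.map cov.continuous).cast e.2.symm e'.2.symm,
    cov.monodromy_eq_of_map_eq (.mk Γ) rfl⟩

theorem joinedIn_pullback_monodromy {Y : Type*} [TopologicalSpace Y] {f : Y → X}
    (hf : Continuous f) {y₀ y : Y} (η : Path y₀ y) (e₀ : p ⁻¹' {f y₀}) :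
    JoinedIn {q : Y × E | f q.1 = p q.2} (y₀, e₀)
      (y, cov.monodromy (.mk (η.map hf)) e₀) := by
  let Γ := cov.liftPath (η.map hf) e₀ ((congrArg f η.source).trans e₀.2.symm)
  refine ⟨η.prod ⟨Γ, cov.liftPath_zero .., rfl⟩, fun t => ?_⟩
  show f (η t) = p (Γ t)
  exact (congr_fun (cov.liftPath_lifts (η.map hf) e₀ _) t).symm

end IsCoveringMap

theorem pullback_pathConnected_of_surjective_pi1_general
    {Y X E : Type*} [TopologicalSpace Y] [TopologicalSpace X] [TopologicalSpace E]
    [PathConnectedSpace Y] [PathConnectedSpace E]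
    (f : Y → X) (hf : Continuous f)
    (p : E → X) (hp : IsCoveringMap p)
    (y₀ : Y) (e₀ : E) (he₀ : p e₀ = f y₀)
    (hsurj : ∀ α : Path (f y₀) (f y₀),
      ∃ β : Path y₀ y₀, (β.map hf).Homotopic α) :
    IsPathConnected {q : Y × E | f q.1 = p q.2} := by
  refine ⟨(y₀, e₀), he₀.symm, ?_⟩
  rintro ⟨y, e⟩ (hye : f y = p e)
  let γ : Path y₀ y := PathConnectedSpace.somePath y₀ y
  obtain ⟨e₁, he₁⟩ := (hp.monodromy_bijective (.mk (γ.map hf))).surjective ⟨e, hye.symm⟩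
  obtain ⟨α, hα⟩ := hp.exists_monodromy_eq ⟨e₀, he₀⟩ e₁
  obtain ⟨β, hβ⟩ := hsurj α
  have hlift : hp.monodromy (.mk ((β.trans γ).map hf)) ⟨e₀, he₀⟩ = ⟨e, hye.symm⟩ := by
    rw [Path.map_trans, Path.Homotopic.Quotient.mk_trans, hp.monodromy_trans_apply,
      Path.Homotopic.Quotient.eq.mpr hβ, hα, he₁]
  simpa only [hlift] using hp.joinedIn_pullback_monodromy hf (β.trans γ) ⟨e₀, he₀⟩

/-- **Surjectivity on fundamental groups makes the pullback of a connected
covering connected** (fact invoked in Section 4 of the paper). Let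
`f : Y → X` be continuous with `Y` path-connected, and `p : E → X` a covering
map with `E` path-connected; fix `y₀ ∈ Y`, `e₀ ∈ E` with `p e₀ = f y₀`. If
the induced homomorphism `f₊ : π₁(Y, y₀) → π₁(X, f y₀)` is surjective (every
loop in `X` at `f y₀` is homotopic to the image of a loop in `Y` at `y₀`),
then the pullback `{(y, e) : f y = p e}` is path-connected. -/
theorem pullback_pathConnected_of_surjective_pi1
    {Y X E : Type*} [TopologicalSpace Y] [TopologicalSpace X] [TopologicalSpace E]
    [PathConnectedSpace Y] [PathConnectedSpace E]
    (f : Y → X) (hf : Continuous f)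
    (p : E → X) (hp : IsCoveringMap p) (hpsurj : Function.Surjective p)
    (y₀ : Y) (e₀ : E) (he₀ : p e₀ = f y₀)
    (hsurj : ∀ α : Path (f y₀) (f y₀),
      ∃ β : Path y₀ y₀, (β.map hf).Homotopic α) :
    IsPathConnected {q : Y × E | f q.1 = p q.2} :=
  pullback_pathConnected_of_surjective_pi1_general f hf p hp y₀ e₀ he₀ hsurj
end
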